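/- (Lemma 1 of the paper, scalar concave case.) Let ν be a probability measure on ℝⁿ with finite first moment and mean μ = ∫ x dν(x), and let g : ℝⁿ → ℝ be concave, differentiable, and integrable with respect to ν. Then for every a ∈ ℝⁿ, ∫ |g(x) − ℓ_μ g(x)| dν(x) ≤ ∫ |g(x) − ℓ_a g(x)| dν(x). -/

import Mathlib

open MeasureTheory RealInnerProductSpace

/-!
A concave differentiable `g` lies below each of its tangent planes, so
`|g - ℓ_a g| = ℓ_a g - g`, and since `ℓ_a g` is affine its `ν`-integral is
`ℓ_a g(μ) - ∫ g dν`. At `a = μ` this is `g(μ) - ∫ g dν`, and `g(μ) ≤ ℓ_a g(μ)` is the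
tangent-plane inequality once more.
-/

theorem ConcaveOn.le_add_fderiv_sub {E : Type*} [NormedAddCommGroup E] [NormedSpace ℝ E]
    {s : Set E} {g : E → ℝ} {g' : E →L[ℝ] ℝ} {a x : E} (hg : ConcaveOn ℝ s g)
    (ha : a ∈ s) (hx : x ∈ s) (hd : HasFDerivAt g g' a) :
    g x ≤ g a + g' (x - a) := by
  set γ : ℝ →ᵃ[ℝ] E := AffineMap.lineMap a x
  have hderiv : HasDerivAt (g ∘ γ) (g' (x - a)) 0 :=
    hd.comp_hasDerivAt_of_eq 0 AffineMap.hasDerivAt_lineMap (by simp [γ])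
  have hslope := (hg.comp_affineMap γ).slope_le_of_hasDerivAt
    (by simpa [γ]) (by simpa [γ]) one_pos hderiv
  simp only [slope_def_field, γ, AffineMap.lineMap_apply_zero, AffineMap.lineMap_apply_one,
    sub_zero, div_one, Function.comp_apply] at hslope
  linarith

section Linearization

variable {E : Type*} [NormedAddCommGroup E] [InnerProductSpace ℝ E] [CompleteSpace E]

noncomputable def linearization (g : E → ℝ) (a x : E) : ℝ :=
  g a + ⟪gradient g a, x - a⟫

theorem ConcaveOn.le_linearization {s : Set E} {g : E → ℝ} {a x : E} (hg : ConcaveOn ℝ s g)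
    (ha : a ∈ s) (hx : x ∈ s) (hd : DifferentiableAt ℝ g a) :
    g x ≤ linearization g a x :=
  hg.le_add_fderiv_sub ha hx hd.hasGradientAt.hasFDerivAt

variable [MeasurableSpace E] {ν : Measure E}

theorem integrable_linearization [IsFiniteMeasure ν] (hν : Integrable (fun x => x) ν) (g : E → ℝ) (a : E) :
    Integrable (linearization g a) ν :=
  (integrable_const (g a)).add ((hν.sub (integrable_const a)).const_inner _)

variable [IsProbabilityMeasure ν]

theorem integral_linearization (hν : Integrable (fun x => x) ν) (g : E → ℝ) (a : E) :
    ∫ x, linearization g a x ∂ν = linearization g a (∫ x, x ∂ν) := by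
  have hsub : Integrable (fun x => x - a) ν := hν.sub (integrable_const a)
  simp only [linearization]
  rw [integral_add (integrable_const _) (hsub.const_inner _), integral_const, integral_inner hsub,
    integral_sub hν (integrable_const a), integral_const]
  simp only [probReal_univ, one_smul]

theorem ConcaveOn.integral_abs_sub_linearization {g : E → ℝ} {a : E}
    (hg : ConcaveOn ℝ Set.univ g) (hd : DifferentiableAt ℝ g a)
    (hν : Integrable (fun x => x) ν) (hint : Integrable g ν) :
    ∫ x, |g x - linearization g a x| ∂ν = linearization g a (∫ x, x ∂ν) - ∫ x, g x ∂ν := by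
  have habs : ∀ x, |g x - linearization g a x| = linearization g a x - g x := fun x => by
    rw [abs_sub_comm, abs_of_nonneg (sub_nonneg.2 (hg.le_linearization trivial trivial hd))]
  simp only [habs]
  rw [integral_sub (integrable_linearization hν g a) hint, integral_linearization hν]

end Linearization

/-- Lemma 1 of the paper (scalar concave case): for a concave differentiable
`g : ℝⁿ → ℝ`, integrable w.r.t. the probability measure `ν` with mean `μ`,
the expected absolute linearization error is minimized at the mean:
`∫ |g(x) − ℓ_μ g(x)| dν ≤ ∫ |g(x) − ℓ_a g(x)| dν` for every `a`. -/
theorem mean_minimizes_abs_linearization_error_of_concave {n : ℕ}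
    (ν : Measure (EuclideanSpace ℝ (Fin n))) [IsProbabilityMeasure ν]
    (hmom1 : Integrable (fun x => x) ν)
    (μ : EuclideanSpace ℝ (Fin n)) (hμ : μ = ∫ x, x ∂ν)
    (g : EuclideanSpace ℝ (Fin n) → ℝ)
    (hconc : ConcaveOn ℝ Set.univ g)
    (hdiff : Differentiable ℝ g)
    (hint : Integrable g ν) :
    ∀ a : EuclideanSpace ℝ (Fin n),
      ∫ x, |g x - (g μ + ⟪gradient g μ, x - μ⟫)| ∂ν
        ≤ ∫ x, |g x - (g a + ⟪gradient g a, x - a⟫)| ∂ν := by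
  intro a
  change ∫ x, |g x - linearization g μ x| ∂ν ≤ ∫ x, |g x - linearization g a x| ∂ν
  rw [hconc.integral_abs_sub_linearization (hdiff μ) hmom1 hint,
    hconc.integral_abs_sub_linearization (hdiff a) hmom1 hint, ← hμ]
  have htangent : g μ ≤ linearization g a μ := hconc.le_linearization trivial trivial (hdiff a)
  simp only [linearization, sub_self, inner_zero_right, add_zero] at htangent ⊢
  linarith
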